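/- arXiv:2605.02097 — 7 statements merged into one kernel-verified Lean document; each statement's English description precedes it below -/
import Mathlib

section
/- Let Ψ be a normalized tripartite pure state in ℂ^{d_A}⊗ℂ^{d_B}⊗ℂ^{d_C} (all dimensions finite and positive), let ρ_BC be its reduced density matrix on the last two factors, and let I₅(Ψ) = Tr[(ρ_BC^Γ)³] be its third-order negativity. Then I₅(Ψ) = 1 if and only if Ψ is fully product, i.e. there exist vectors f : Fin d_A → ℂ, g : Fin d_B → ℂ, h : Fin d_C → ℂ with Ψ(a,b,c) = f(a)·g(b)·h(c) for all a, b, c. -/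
open scoped BigOperators
open Matrix

noncomputable section

/-- Reduced density matrix on the last two factors of a tripartite pure state. -/
def rhoBC (dA dB dC : ℕ) (Ψ : Fin dA × Fin dB × Fin dC → ℂ) :
    Matrix (Fin dB × Fin dC) (Fin dB × Fin dC) ℂ :=
  fun p q => ∑ a : Fin dA, Ψ (a, p.1, p.2) * (starRingEnd ℂ) (Ψ (a, q.1, q.2))

/-- Partial transpose over the second tensor factor. -/
def ptranspose {d d' : ℕ} (M : Matrix (Fin d × Fin d') (Fin d × Fin d') ℂ) :
    Matrix (Fin d × Fin d') (Fin d × Fin d') ℂ :=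
  fun p q => M (p.1, q.2) (q.1, p.2)

/-- Third-order negativity of a tripartite pure state. -/
def I5 (dA dB dC : ℕ) (Ψ : Fin dA × Fin dB × Fin dC → ℂ) : ℝ :=
  ((ptranspose (rhoBC dA dB dC Ψ)) ^ 3).trace.re

/-! Write `M = ρ_BC^Γ` and `‖·‖` for the Frobenius norm. By Cauchy–Schwarz and submultiplicativity,
`|Tr M³| ≤ ‖M‖ ‖M²‖ ≤ ‖M‖³`. The partial transpose only permutes entries, so `‖M‖ = ‖ρ_BC‖`, and
`‖ρ_BC‖²` is the sum of the squared Gram entries `|⟨ψ_y, ψ_y'⟩|²` of the slices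
`ψ_y = Ψ(·, y) ∈ ℂ^{d_A}`, which Cauchy–Schwarz bounds by `(∑ ‖ψ_y‖²)² = 1`. Hence `I₅ = 1` forces
equality in Cauchy–Schwarz: all slices are parallel, i.e. `Ψ` is a product across `A | BC`.
Exchanging `A` and `B` only conjugates `Tr M³`, so `Ψ` is also a product across `B | AC`, and the
two factorizations combine. Conversely, for a product state `M` has rank one, so
`Tr M³ = (Tr M)³ = (Tr ρ_BC)³ = 1`. -/

open ComplexConjugate
open scoped Matrix.Norms.Frobenius

section Gram

variable {𝕜 E ι : Type*} [RCLike 𝕜] [NormedAddCommGroup E] [InnerProductSpace 𝕜 E] [Fintype ι]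

theorem sum_sum_norm_inner_sq_le (v : ι → E) :
    ∑ i, ∑ j, ‖inner 𝕜 (v i) (v j)‖ ^ 2 ≤ (∑ i, ‖v i‖ ^ 2) ^ 2 := by
  rw [sq (∑ i, _), Finset.sum_mul_sum]
  gcongr with i _ j _
  rw [← mul_pow]
  exact pow_le_pow_left₀ (norm_nonneg _) (norm_inner_le_norm _ _) 2

theorem exists_smul_of_sum_sum_norm_inner_sq_eq (v : ι → E)
    (h : ∑ i, ∑ j, ‖inner 𝕜 (v i) (v j)‖ ^ 2 = (∑ i, ‖v i‖ ^ 2) ^ 2) :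
    ∃ (u : E) (r : ι → 𝕜), ∀ i, v i = r i • u := by
  have hle : ∀ i j, ‖inner 𝕜 (v i) (v j)‖ ^ 2 ≤ ‖v i‖ ^ 2 * ‖v j‖ ^ 2 := fun i j => by
    rw [← mul_pow]
    exact pow_le_pow_left₀ (norm_nonneg _) (norm_inner_le_norm _ _) 2
  rw [sq (∑ i, _), Finset.sum_mul_sum, Finset.sum_eq_sum_iff_of_le fun i _ =>
    Finset.sum_le_sum fun j _ => hle i j] at h
  have hCS : ∀ i j, ‖inner 𝕜 (v i) (v j)‖ = ‖v i‖ * ‖v j‖ := fun i j => by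
    have hij := (Finset.sum_eq_sum_iff_of_le fun j _ => hle i j).1 (h i (Finset.mem_univ _)) j
      (Finset.mem_univ _)
    rw [← mul_pow] at hij
    exact (pow_left_inj₀ (norm_nonneg _) (by positivity) two_ne_zero).1 hij
  by_cases hzero : ∀ i, v i = 0
  · exact ⟨0, 0, fun i => by simp [hzero i]⟩
  obtain ⟨i₀, hi₀⟩ := not_forall.1 hzero
  have hmul : ∀ i, ∃ r : 𝕜, v i = r • v i₀ := fun i =>
    Or.resolve_left (((norm_inner_eq_norm_tfae 𝕜 (v i₀) (v i)).out 0 2).1 (hCS i₀ i)) hi₀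
  choose r hr using hmul
  exact ⟨v i₀, r, hr⟩

end Gram

namespace Matrix

variable {n : Type*} [Fintype n]

section CommSemiring

variable {R : Type*} [CommSemiring R]

theorem trace_pow_three [DecidableEq n] (M : Matrix n n R) :
    (M ^ 3).trace = ∑ p, ∑ q, ∑ r, M p q * M q r * M r p := by
  simp only [pow_succ, pow_zero, Matrix.one_mul, trace, diag, mul_apply, Finset.sum_mul]
  exact Finset.sum_congr rfl fun p _ => Finset.sum_comm

theorem trace_vecMulVec_pow_succ [DecidableEq n] (x y : n → R) (k : ℕ) :
    (vecMulVec x y ^ (k + 1)).trace = (x ⬝ᵥ y) ^ (k + 1) := by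
  have hpow : vecMulVec x y ^ (k + 1) = (y ⬝ᵥ x) ^ k • vecMulVec x y := by
    induction k with
    | zero => simp
    | succ k ih =>
      rw [pow_succ, ih, smul_mul, vecMulVec_mul_vecMulVec, vecMulVec_smul, smul_smul, pow_succ]
  rw [hpow, trace_smul, trace_vecMulVec, smul_eq_mul, dotProduct_comm y, pow_succ]

end CommSemiring

section RCLike

variable {𝕜 : Type*} [RCLike 𝕜]

theorem frobenius_norm_sq_eq_sum {m : Type*} [Fintype m] (A : Matrix m n 𝕜) :
    ‖A‖ ^ 2 = ∑ i, ∑ j, ‖A i j‖ ^ 2 := by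
  rw [frobenius_norm_def, ← Real.rpow_natCast, ← Real.rpow_mul (by positivity)]
  norm_num

theorem norm_trace_mul_le (A B : Matrix n n 𝕜) : ‖(A * B).trace‖ ≤ ‖A‖ * ‖B‖ := by
  have hsum : ‖(A * B).trace‖ ≤ ∑ ij : n × n, ‖A ij.1 ij.2‖ * ‖Bᵀ ij.1 ij.2‖ := by
    simp only [trace, diag, mul_apply, transpose_apply, ← norm_mul, Fintype.sum_prod_type]
    exact (norm_sum_le _ _).trans (Finset.sum_le_sum fun i _ => norm_sum_le _ _)
  refine le_of_pow_le_pow_left₀ two_ne_zero (by positivity) ?_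
  calc ‖(A * B).trace‖ ^ 2 ≤ (∑ ij : n × n, ‖A ij.1 ij.2‖ * ‖Bᵀ ij.1 ij.2‖) ^ 2 := by gcongr
    _ ≤ (∑ ij : n × n, ‖A ij.1 ij.2‖ ^ 2) * ∑ ij : n × n, ‖Bᵀ ij.1 ij.2‖ ^ 2 :=
      Finset.sum_mul_sq_le_sq_mul_sq _ _ _
    _ = (‖A‖ * ‖B‖) ^ 2 := by
      rw [mul_pow, ← frobenius_norm_transpose B, frobenius_norm_sq_eq_sum,
        frobenius_norm_sq_eq_sum, Fintype.sum_prod_type, Fintype.sum_prod_type]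

theorem norm_trace_pow_three_le [DecidableEq n] (M : Matrix n n 𝕜) : ‖(M ^ 3).trace‖ ≤ ‖M‖ ^ 3 :=
  calc ‖(M ^ 3).trace‖ = ‖(M * M ^ 2).trace‖ := by rw [← pow_succ']
    _ ≤ ‖M‖ * ‖M * M‖ := by rw [sq]; exact norm_trace_mul_le M _
    _ ≤ ‖M‖ * (‖M‖ * ‖M‖) := by gcongr; exact frobenius_norm_mul M M
    _ = ‖M‖ ^ 3 := by ring

end RCLike

end Matrix

theorem exists_product_of_factor_A_of_factor_B {α β γ K : Type*} [Field K]
    {Ψ : α × β × γ → K}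
    (hA : ∃ (f : α → K) (w : β × γ → K), ∀ a b c, Ψ (a, b, c) = f a * w (b, c))
    (hB : ∃ (g : β → K) (u : α × γ → K), ∀ a b c, Ψ (a, b, c) = g b * u (a, c)) :
    ∃ (f : α → K) (g : β → K) (h : γ → K), ∀ a b c, Ψ (a, b, c) = f a * g b * h c := by
  obtain ⟨f, w, hfw⟩ := hA
  obtain ⟨g, u, hgu⟩ := hB
  by_cases hzero : ∀ a b c, Ψ (a, b, c) = 0
  · exact ⟨0, 0, 0, fun a b c => by simp [hzero]⟩
  simp only [not_forall] at hzero
  obtain ⟨a₀, b₀, c₀, hΨ₀⟩ := hzero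
  have hf : f a₀ ≠ 0 := fun hf => hΨ₀ (by rw [hfw, hf, zero_mul])
  refine ⟨f, g, fun c => u (a₀, c) / f a₀, fun a b c => ?_⟩
  have hw : w (b, c) = g b * u (a₀, c) / f a₀ := by
    rw [eq_div_iff hf, ← hgu, hfw, mul_comm]
  rw [hfw, hw, mul_div_assoc, mul_assoc]

section TripartiteState

variable {dA dB dC : ℕ}

theorem trace_ptranspose {d d' : ℕ} (M : Matrix (Fin d × Fin d') (Fin d × Fin d') ℂ) :
    (ptranspose M).trace = M.trace :=
  rfl

theorem frobenius_norm_ptranspose {d d' : ℕ} (M : Matrix (Fin d × Fin d') (Fin d × Fin d') ℂ) :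
    ‖ptranspose M‖ = ‖M‖ := by
  let e : (Fin d × Fin d') × (Fin d × Fin d') ≃ (Fin d × Fin d') × (Fin d × Fin d') :=
    ⟨fun ⟨(b, c), (b', c')⟩ => ((b, c'), (b', c)), fun ⟨(b, c), (b', c')⟩ => ((b, c'), (b', c)),
      fun _ => rfl, fun _ => rfl⟩
  rw [← pow_left_inj₀ (norm_nonneg _) (norm_nonneg _) two_ne_zero,
    Matrix.frobenius_norm_sq_eq_sum, Matrix.frobenius_norm_sq_eq_sum]
  simp only [← Fintype.sum_prod_type']
  exact Fintype.sum_equiv e _ _ fun _ => rfl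

def sliceA (Ψ : Fin dA × Fin dB × Fin dC → ℂ) (y : Fin dB × Fin dC) :
    EuclideanSpace ℂ (Fin dA) :=
  WithLp.toLp 2 fun a => Ψ (a, y.1, y.2)

theorem rhoBC_apply_eq_inner (Ψ : Fin dA × Fin dB × Fin dC → ℂ) (p q : Fin dB × Fin dC) :
    rhoBC dA dB dC Ψ p q = inner ℂ (sliceA Ψ q) (sliceA Ψ p) := by
  simp [rhoBC, sliceA, PiLp.inner_apply]

theorem sum_norm_sliceA_sq (Ψ : Fin dA × Fin dB × Fin dC → ℂ) :
    ∑ y, ‖sliceA Ψ y‖ ^ 2 = ∑ v, ‖Ψ v‖ ^ 2 := by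
  simp [sliceA, EuclideanSpace.norm_sq_eq, Fintype.sum_prod_type, Finset.sum_comm (γ := Fin dA)]

theorem frobenius_norm_rhoBC_sq (Ψ : Fin dA × Fin dB × Fin dC → ℂ) :
    ‖rhoBC dA dB dC Ψ‖ ^ 2 = ∑ y, ∑ y', ‖inner ℂ (sliceA Ψ y) (sliceA Ψ y')‖ ^ 2 := by
  rw [Matrix.frobenius_norm_sq_eq_sum, Finset.sum_comm]
  simp only [rhoBC_apply_eq_inner]

theorem exists_factor_A_of_I5_eq_one (Ψ : Fin dA × Fin dB × Fin dC → ℂ)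
    (hΨ : ∑ v, ‖Ψ v‖ ^ 2 = 1) (h : I5 dA dB dC Ψ = 1) :
    ∃ (f : Fin dA → ℂ) (w : Fin dB × Fin dC → ℂ), ∀ a b c, Ψ (a, b, c) = f a * w (b, c) := by
  have hnormρ : ‖rhoBC dA dB dC Ψ‖ = 1 := by
    have hle : ‖rhoBC dA dB dC Ψ‖ ^ 2 ≤ 1 := by
      simpa only [← frobenius_norm_rhoBC_sq, sum_norm_sliceA_sq, hΨ, one_pow] using
        sum_sum_norm_inner_sq_le (𝕜 := ℂ) (sliceA Ψ)
    have hge : 1 ≤ ‖rhoBC dA dB dC Ψ‖ ^ 3 := by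
      rw [← h, ← frobenius_norm_ptranspose]
      exact (Complex.re_le_norm _).trans (Matrix.norm_trace_pow_three_le _)
    exact le_antisymm ((pow_le_one_iff_of_nonneg (norm_nonneg _) two_ne_zero).1 hle)
      ((one_le_pow_iff_of_nonneg (norm_nonneg _) three_ne_zero).1 hge)
  obtain ⟨u, r, hur⟩ := exists_smul_of_sum_sum_norm_inner_sq_eq (𝕜 := ℂ) (sliceA Ψ) (by
    rw [← frobenius_norm_rhoBC_sq, sum_norm_sliceA_sq, hΨ, hnormρ])
  refine ⟨fun a => u a, r, fun a b c => ?_⟩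
  simpa [sliceA, mul_comm] using congr_arg (· a) (hur (b, c))

def swapAB (Ψ : Fin dA × Fin dB × Fin dC → ℂ) : Fin dB × Fin dA × Fin dC → ℂ :=
  fun v => Ψ (v.2.1, v.1, v.2.2)

theorem sum_norm_swapAB_sq (Ψ : Fin dA × Fin dB × Fin dC → ℂ) :
    ∑ v, ‖swapAB Ψ v‖ ^ 2 = ∑ v, ‖Ψ v‖ ^ 2 := by
  simp only [swapAB, Fintype.sum_prod_type]
  exact Finset.sum_comm

def cycleTerm (Ψ : Fin dA × Fin dB × Fin dC → ℂ) :
    (Fin dB × Fin dC) × (Fin dB × Fin dC) × (Fin dB × Fin dC) × Fin dA × Fin dA × Fin dA → ℂ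
  | ((b₁, c₁), (b₂, c₂), (b₃, c₃), a₁, a₂, a₃) =>
    Ψ (a₁, b₁, c₂) * conj (Ψ (a₁, b₂, c₁)) * (Ψ (a₂, b₂, c₃) * conj (Ψ (a₂, b₃, c₂))) *
      (Ψ (a₃, b₃, c₁) * conj (Ψ (a₃, b₁, c₃)))

theorem trace_ptranspose_rhoBC_pow_three (Ψ : Fin dA × Fin dB × Fin dC → ℂ) :
    (ptranspose (rhoBC dA dB dC Ψ) ^ 3).trace = ∑ x, cycleTerm Ψ x := by
  have expand : ∀ X Y Z : Fin dA → ℂ, (∑ a, X a) * (∑ a, Y a) * (∑ a, Z a) =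
      ∑ a₁, ∑ a₂, ∑ a₃, X a₁ * Y a₂ * Z a₃ := fun X Y Z => by
    rw [Finset.sum_mul_sum]
    simp only [Finset.sum_mul]
    simp only [Finset.mul_sum]
  simp only [Matrix.trace_pow_three, ptranspose, rhoBC, expand]
  simp only [cycleTerm, Fintype.sum_prod_type]

theorem trace_ptranspose_rhoBC_swapAB_pow_three (Ψ : Fin dA × Fin dB × Fin dC → ℂ) :
    (ptranspose (rhoBC dB dA dC (swapAB Ψ)) ^ 3).trace =
      conj (ptranspose (rhoBC dA dB dC Ψ) ^ 3).trace := by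
  let e : (Fin dB × Fin dC) × (Fin dB × Fin dC) × (Fin dB × Fin dC) × Fin dA × Fin dA × Fin dA ≃
      (Fin dA × Fin dC) × (Fin dA × Fin dC) × (Fin dA × Fin dC) × Fin dB × Fin dB × Fin dB :=
    ⟨fun ((b₁, c₁), (b₂, c₂), (b₃, c₃), a₁, a₂, a₃) => ((a₁, c₃), (a₂, c₁), (a₃, c₂), b₂, b₃, b₁),
      fun ((a₁, c₃), (a₂, c₁), (a₃, c₂), b₂, b₃, b₁) => ((b₁, c₁), (b₂, c₂), (b₃, c₃), a₁, a₂, a₃),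
      fun _ => rfl, fun _ => rfl⟩
  rw [trace_ptranspose_rhoBC_pow_three, trace_ptranspose_rhoBC_pow_three, map_sum]
  refine (Fintype.sum_equiv e _ _ fun x => ?_).symm
  simp only [e, cycleTerm, swapAB, map_mul, Complex.conj_conj, Equiv.coe_fn_mk]
  ring

theorem I5_swapAB (Ψ : Fin dA × Fin dB × Fin dC → ℂ) :
    I5 dB dA dC (swapAB Ψ) = I5 dA dB dC Ψ := by
  rw [I5, I5, trace_ptranspose_rhoBC_swapAB_pow_three, Complex.conj_re]

theorem trace_rhoBC (Ψ : Fin dA × Fin dB × Fin dC → ℂ) :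
    (rhoBC dA dB dC Ψ).trace = ((∑ v, ‖Ψ v‖ ^ 2 : ℝ) : ℂ) := by
  simp only [Matrix.trace, Matrix.diag, rhoBC, Complex.mul_conj, Complex.normSq_eq_norm_sq,
    Fintype.sum_prod_type, Complex.ofReal_sum]
  exact (Finset.sum_congr rfl fun b _ => Finset.sum_comm).trans Finset.sum_comm

theorem exists_ptranspose_rhoBC_eq_vecMulVec {Ψ : Fin dA × Fin dB × Fin dC → ℂ}
    {f : Fin dA → ℂ} {g : Fin dB → ℂ} {h : Fin dC → ℂ}
    (hfgh : ∀ a b c, Ψ (a, b, c) = f a * g b * h c) :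
    ∃ x y : Fin dB × Fin dC → ℂ, ptranspose (rhoBC dA dB dC Ψ) = vecMulVec x y := by
  refine ⟨fun p => (∑ a, f a * conj (f a)) * (g p.1 * conj (h p.2)),
    fun q => conj (g q.1) * h q.2, Matrix.ext fun p q => ?_⟩
  simp only [ptranspose, rhoBC, vecMulVec_apply, hfgh, Finset.sum_mul, map_mul]
  exact Finset.sum_congr rfl fun a _ => by ring

theorem I5_eq_of_product {Ψ : Fin dA × Fin dB × Fin dC → ℂ}
    {f : Fin dA → ℂ} {g : Fin dB → ℂ} {h : Fin dC → ℂ}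
    (hfgh : ∀ a b c, Ψ (a, b, c) = f a * g b * h c) :
    I5 dA dB dC Ψ = (∑ v, ‖Ψ v‖ ^ 2) ^ 3 := by
  obtain ⟨x, y, hxy⟩ := exists_ptranspose_rhoBC_eq_vecMulVec hfgh
  have hcube : (ptranspose (rhoBC dA dB dC Ψ) ^ 3).trace =
      (ptranspose (rhoBC dA dB dC Ψ)).trace ^ 3 := by
    rw [hxy, Matrix.trace_vecMulVec_pow_succ, Matrix.trace_vecMulVec]
  rw [I5, hcube, trace_ptranspose, trace_rhoBC, ← Complex.ofReal_pow, Complex.ofReal_re]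

end TripartiteState

theorem I5_eq_one_iff_fully_product_general
    (dA dB dC : ℕ)
    (Ψ : Fin dA × Fin dB × Fin dC → ℂ)
    (hΨ : ∑ v : Fin dA × Fin dB × Fin dC, ‖Ψ v‖ ^ 2 = 1) :
    I5 dA dB dC Ψ = 1 ↔
      ∃ (f : Fin dA → ℂ) (g : Fin dB → ℂ) (h : Fin dC → ℂ),
        ∀ a b c, Ψ (a, b, c) = f a * g b * h c := by
  constructor
  · intro h
    refine exists_product_of_factor_A_of_factor_B
      (exists_factor_A_of_I5_eq_one Ψ hΨ h) ?_
    obtain ⟨g, u, hgu⟩ := exists_factor_A_of_I5_eq_one (swapAB Ψ)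
      (by rw [sum_norm_swapAB_sq, hΨ]) (by rw [I5_swapAB, h])
    exact ⟨g, u, fun a b c => hgu b a c⟩
  · rintro ⟨f, g, h, hfgh⟩
    rw [I5_eq_of_product hfgh, hΨ, one_pow]

theorem I5_eq_one_iff_fully_product
    (dA dB dC : ℕ) (hdA : 0 < dA) (hdB : 0 < dB) (hdC : 0 < dC)
    (Ψ : Fin dA × Fin dB × Fin dC → ℂ)
    (hΨ : ∑ v : Fin dA × Fin dB × Fin dC, ‖Ψ v‖ ^ 2 = 1) :
    I5 dA dB dC Ψ = 1 ↔
      ∃ (f : Fin dA → ℂ) (g : Fin dB → ℂ) (h : Fin dC → ℂ),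
        ∀ a b c, Ψ (a, b, c) = f a * g b * h c :=
  I5_eq_one_iff_fully_product_general dA dB dC Ψ hΨ

end
end

section
/- For every bipartite density matrix ρ on ℂ^{d_B}⊗ℂ^{d_C} (finite positive dimensions), the real number Tr[(ρ^Γ)³] satisfies Tr[(ρ^Γ)³] ≤ Tr(ρ²) ≤ 1. -/
open scoped BigOperators ComplexOrder
open Matrix

noncomputable section

/-!
Write `ρ = ∑ xᵢ xᵢᴴ`. For a rank-one `x xᴴ`, reshaping `v` and `x` into `d × d'` matrices turns
`⟨v, (x xᴴ)^Γ v⟩` into `∑ G c c' · conj (G c' c)` with `G = Vᴴ X`, which Cauchy–Schwarz bounds by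
`‖x‖² ‖v‖²`. Summing, `ρ^Γ ≤ Tr ρ • 1 = 1` in the Loewner order (and likewise `ρ ≤ 1`).
For the Hermitian `σ = ρ^Γ` this gives `σ³ = σ σ σᴴ ≤ σ σᴴ = σ²`, and `Tr σ² = Tr ρ²` because the
partial transpose only permutes matrix entries. Finally `ρ = Bᴴ B` gives
`Tr ρ² = Tr (B ρ Bᴴ) ≤ Tr (B Bᴴ) = Tr ρ = 1`.
-/

open scoped MatrixOrder

lemma norm_sum_mul_sq_le {ι : Type*} (s : Finset ι) (f g : ι → ℂ) :
    ‖∑ i ∈ s, f i * g i‖ ^ 2 ≤ (∑ i ∈ s, ‖f i‖ ^ 2) * ∑ i ∈ s, ‖g i‖ ^ 2 :=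
  calc ‖∑ i ∈ s, f i * g i‖ ^ 2 ≤ (∑ i ∈ s, ‖f i‖ * ‖g i‖) ^ 2 := by
        gcongr
        simpa only [norm_mul] using norm_sum_le s (fun i => f i * g i)
    _ ≤ _ := Finset.sum_mul_sq_le_sq_mul_sq s _ _

lemma re_sum_mul_star_swap_le {m : Type*} [Fintype m] (G : m → m → ℂ) :
    (∑ i, ∑ j, G i j * star (G j i)).re ≤ ∑ i, ∑ j, ‖G i j‖ ^ 2 := by
  have amgm : ∀ i j, (G i j * star (G j i)).re ≤ (‖G i j‖ ^ 2 + ‖G j i‖ ^ 2) / 2 := fun i j =>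
    calc (G i j * star (G j i)).re ≤ ‖G i j * star (G j i)‖ := Complex.re_le_norm _
      _ = ‖G i j‖ * ‖G j i‖ := by rw [norm_mul, norm_star]
      _ ≤ _ := by nlinarith [sq_nonneg (‖G i j‖ - ‖G j i‖)]
  calc (∑ i, ∑ j, G i j * star (G j i)).re
      = ∑ i, ∑ j, (G i j * star (G j i)).re := by simp only [Complex.re_sum]
    _ ≤ ∑ i, ∑ j, (‖G i j‖ ^ 2 + ‖G j i‖ ^ 2) / 2 := by gcongr with i _ j _; exact amgm i j
    _ = ∑ i, ∑ j, ‖G i j‖ ^ 2 := by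
      simp only [add_div, Finset.sum_add_distrib]
      rw [Finset.sum_comm (f := fun i j => ‖G j i‖ ^ 2 / 2), ← Finset.sum_add_distrib]
      simp only [← Finset.sum_add_distrib, add_halves]

namespace Matrix

variable {n : Type*} [Fintype n]

lemma star_dotProduct_self_eq (v : n → ℂ) : star v ⬝ᵥ v = ((∑ i, ‖v i‖ ^ 2 : ℝ) : ℂ) := by
  simp [dotProduct, Complex.conj_mul']

lemma trace_vecMulVec_self_star (x : n → ℂ) :
    (vecMulVec x (star x)).trace = ((∑ i, ‖x i‖ ^ 2 : ℝ) : ℂ) := by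
  rw [trace_vecMulVec, dotProduct_comm, star_dotProduct_self_eq]

lemma map_le_trace_smul_one_of_vecMulVec {m : Type*} [Fintype m] [DecidableEq m]
    (f : Matrix n n ℂ →+ Matrix m m ℂ)
    (hf : ∀ x : n → ℂ, f (vecMulVec x (star x)) ≤ (vecMulVec x (star x)).trace • 1)
    {ρ : Matrix n n ℂ} (hρ : ρ.PosSemidef) : f ρ ≤ ρ.trace • 1 := by
  obtain ⟨k, x, rfl⟩ := posSemidef_iff_eq_sum_vecMulVec.mp hρ
  simp only [map_sum, trace_sum, Finset.sum_smul]
  exact Finset.sum_le_sum fun i _ => hf (x i)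

variable [DecidableEq n]

lemma IsHermitian.le_smul_one_of_re_dotProduct_le {H : Matrix n n ℂ} (hH : H.IsHermitian) {c : ℝ}
    (h : ∀ v : n → ℂ, (star v ⬝ᵥ H *ᵥ v).re ≤ c * ∑ i, ‖v i‖ ^ 2) : H ≤ (c : ℂ) • 1 := by
  refine le_iff.mpr <| .of_dotProduct_mulVec_nonneg
    ((isHermitian_one.smul (by simp [IsSelfAdjoint])).sub hH) fun v => ?_
  rw [sub_mulVec, smul_mulVec, one_mulVec, dotProduct_sub, dotProduct_smul,
    star_dotProduct_self_eq, Complex.nonneg_iff]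
  simp only [smul_eq_mul, Complex.sub_re, Complex.sub_im, Complex.re_ofReal_mul,
    Complex.im_ofReal_mul, Complex.ofReal_im, mul_zero, zero_sub, sub_nonneg]
  exact ⟨h v, by simpa using hH.im_star_dotProduct_mulVec_self v⟩

lemma vecMulVec_self_star_le (x : n → ℂ) :
    vecMulVec x (star x) ≤ (vecMulVec x (star x)).trace • 1 := by
  rw [trace_vecMulVec_self_star]
  refine (posSemidef_vecMulVec_self_star x).isHermitian.le_smul_one_of_re_dotProduct_le
    fun v => ?_
  have hq : star v ⬝ᵥ vecMulVec x (star x) *ᵥ v = (‖star x ⬝ᵥ v‖ : ℂ) ^ 2 := by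
    rw [vecMulVec_mulVec, ← Complex.conj_mul', ← Complex.star_def, ← star_dotProduct,
      op_smul_eq_smul, dotProduct_smul, smul_eq_mul, mul_comm]
  rw [hq, ← Complex.ofReal_pow, Complex.ofReal_re]
  simpa [dotProduct] using norm_sum_mul_sq_le Finset.univ (star x) v

lemma PosSemidef.le_trace_smul_one {ρ : Matrix n n ℂ} (hρ : ρ.PosSemidef) : ρ ≤ ρ.trace • 1 :=
  map_le_trace_smul_one_of_vecMulVec (AddMonoidHom.id _) vecMulVec_self_star_le hρ

lemma trace_mul_mul_conjTranspose_le {A M : Matrix n n ℂ} (hM : M ≤ 1) :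
    (A * M * Aᴴ).trace ≤ (A * Aᴴ).trace := by
  have h := star_right_conjugate_le_conjugate hM A
  rw [mul_one] at h
  have h0 := (le_iff.mp h).trace_nonneg
  rwa [trace_sub, sub_nonneg] at h0

lemma IsHermitian.trace_pow_three_le_trace_sq {H : Matrix n n ℂ} (hH : H.IsHermitian)
    (hle : H ≤ 1) : (H ^ 3).trace ≤ (H ^ 2).trace := by
  simpa [pow_succ, hH.eq] using trace_mul_mul_conjTranspose_le (A := H) hle

lemma PosSemidef.trace_sq_le_trace {ρ : Matrix n n ℂ} (hρ : ρ.PosSemidef) (hle : ρ ≤ 1) :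
    (ρ ^ 2).trace ≤ ρ.trace := by
  obtain ⟨B, rfl⟩ := CStarAlgebra.nonneg_iff_eq_star_mul_self.mp hρ.nonneg
  calc ((star B * B) ^ 2).trace = (B * (star B * B) * Bᴴ).trace := by
        rw [sq, star_eq_conjTranspose, Matrix.mul_assoc, trace_mul_comm]
    _ ≤ (B * Bᴴ).trace := trace_mul_mul_conjTranspose_le hle
    _ = (star B * B).trace := trace_mul_comm _ _

end Matrix

section PartialTranspose

variable {d d' : ℕ}

lemma ptranspose_isHermitian {M : Matrix (Fin d × Fin d') (Fin d × Fin d') ℂ}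
    (hM : M.IsHermitian) : (ptranspose M).IsHermitian :=
  ext fun p q => congrFun (congrFun hM (p.1, q.2)) (q.1, p.2)

lemma trace_ptranspose_sq (M : Matrix (Fin d × Fin d') (Fin d × Fin d') ℂ) :
    ((ptranspose M) ^ 2).trace = (M ^ 2).trace := by
  simp only [sq, trace, diag_apply, mul_apply, ← Fintype.sum_prod_type']
  exact Fintype.sum_bijective (fun z => ((z.1.1, z.2.2), (z.2.1, z.1.2)))
    (Function.Involutive.bijective fun _ => rfl) _ _ fun _ => rfl

lemma re_dotProduct_ptranspose_vecMulVec_le (x v : Fin d × Fin d' → ℂ) :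
    (star v ⬝ᵥ ptranspose (vecMulVec x (star x)) *ᵥ v).re ≤
      (∑ p, ‖x p‖ ^ 2) * ∑ p, ‖v p‖ ^ 2 := by
  set G : Fin d' → Fin d' → ℂ := fun c c' => ∑ b, star (v (b, c)) * x (b, c')
  have hG : star v ⬝ᵥ ptranspose (vecMulVec x (star x)) *ᵥ v =
      ∑ c, ∑ c', G c c' * star (G c' c) := by
    simp only [G, dotProduct, mulVec, ptranspose, vecMulVec_apply, Fintype.sum_prod_type,
      star_sum, star_mul', star_star, Finset.mul_sum, Finset.sum_mul, Pi.star_apply]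
    rw [Finset.sum_comm]
    refine Finset.sum_congr rfl fun c _ => ?_
    simp_rw [Finset.sum_comm (s := (Finset.univ : Finset (Fin d)))
      (t := (Finset.univ : Finset (Fin d')))]
    refine Finset.sum_congr rfl fun c' _ => ?_
    rw [Finset.sum_comm]
    exact Finset.sum_congr rfl fun b' _ => Finset.sum_congr rfl fun b _ => by ring
  have hG_le : ∀ c c', ‖G c c'‖ ^ 2 ≤ (∑ b, ‖v (b, c)‖ ^ 2) * ∑ b, ‖x (b, c')‖ ^ 2 :=
    fun c c' => by
      simpa [G] using
        norm_sum_mul_sq_le Finset.univ (fun b => star (v (b, c))) (fun b => x (b, c'))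
  calc (star v ⬝ᵥ ptranspose (vecMulVec x (star x)) *ᵥ v).re
      ≤ ∑ c, ∑ c', ‖G c c'‖ ^ 2 := hG ▸ re_sum_mul_star_swap_le G
    _ ≤ ∑ c, ∑ c', (∑ b, ‖v (b, c)‖ ^ 2) * ∑ b, ‖x (b, c')‖ ^ 2 := by
      gcongr with c _ c' _
      exact hG_le c c'
    _ = (∑ p, ‖x p‖ ^ 2) * ∑ p, ‖v p‖ ^ 2 := by
      rw [← Finset.sum_mul_sum, mul_comm, Fintype.sum_prod_type_right, Fintype.sum_prod_type_right]

lemma ptranspose_vecMulVec_self_star_le (x : Fin d × Fin d' → ℂ) :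
    ptranspose (vecMulVec x (star x)) ≤ (vecMulVec x (star x)).trace • 1 := by
  rw [trace_vecMulVec_self_star]
  exact (ptranspose_isHermitian (posSemidef_vecMulVec_self_star x).isHermitian)
    |>.le_smul_one_of_re_dotProduct_le (re_dotProduct_ptranspose_vecMulVec_le x)

lemma ptranspose_le_trace_smul_one {ρ : Matrix (Fin d × Fin d') (Fin d × Fin d') ℂ}
    (hρ : ρ.PosSemidef) : ptranspose ρ ≤ ρ.trace • 1 :=
  map_le_trace_smul_one_of_vecMulVec (AddMonoidHom.mk' ptranspose fun _ _ => rfl)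
    ptranspose_vecMulVec_self_star_le hρ

end PartialTranspose

theorem trace_ptranspose_cube_le_general
    (dB dC : ℕ)
    (ρ : Matrix (Fin dB × Fin dC) (Fin dB × Fin dC) ℂ)
    (hρ : ρ.PosSemidef) (htr : ρ.trace = 1) :
    ((ptranspose ρ) ^ 3).trace.re ≤ ((ρ ^ 2).trace).re ∧ ((ρ ^ 2).trace).re ≤ 1 := by
  have hρ_le : ρ ≤ 1 := by simpa [htr] using hρ.le_trace_smul_one
  have hσ_le : ptranspose ρ ≤ 1 := by simpa [htr] using ptranspose_le_trace_smul_one hρ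
  have h3 := (ptranspose_isHermitian hρ.isHermitian).trace_pow_three_le_trace_sq hσ_le
  rw [trace_ptranspose_sq] at h3
  have h2 := hρ.trace_sq_le_trace hρ_le
  rw [htr] at h2
  exact ⟨Complex.re_le_re h3, Complex.re_le_re h2⟩

theorem trace_ptranspose_cube_le
    (dB dC : ℕ) (hdB : 0 < dB) (hdC : 0 < dC)
    (ρ : Matrix (Fin dB × Fin dC) (Fin dB × Fin dC) ℂ)
    (hρ : ρ.PosSemidef) (htr : ρ.trace = 1) :
    ((ptranspose ρ) ^ 3).trace.re ≤ ((ρ ^ 2).trace).re ∧ ((ρ ^ 2).trace).re ≤ 1 :=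
  trace_ptranspose_cube_le_general dB dC ρ hρ htr

end
end

section
/- Let v be a unit vector in ℂ^{d_B}⊗ℂ^{d_C} with Schmidt coefficients s_1, …, s_m where m = min(d_B, d_C), and let P = |v⟩⟨v| be the orthogonal projection onto v. Then the multiset of eigenvalues (with multiplicity) of the partial transpose P^Γ consists of: s_k² for each k = 1,…,m; +s_k s_l and −s_k s_l for each pair 1 ≤ k < l ≤ m; and 0 with multiplicity d_B·d_C − m². -/
/-!
With `g k l = e k ⊗ conj (f l)`, an orthonormal family, the partial transpose of `|v⟩⟨v|` is
`∑ k l, s k s l |g k l⟩⟨g l k|`. Hence `g k k` is an eigenvector for `s k ^ 2`, for `k < l` the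
vectors `(g k l ± g l k) / √2` are eigenvectors for `± s k s l`, and the orthogonal complement of
all `g k l` is the kernel.
-/

open scoped BigOperators
open Matrix

noncomputable section

/-- Orthogonal projection onto a vector: `(|v⟩⟨v|)_{i j} = v i * conj (v j)`. -/
def proj {n : Type*} [Fintype n] (v : n → ℂ) : Matrix n n ℂ :=
  Matrix.vecMulVec v (star v)

open Polynomial
open scoped Kronecker

section Spectrum

variable {𝕜 n ι : Type*} [RCLike 𝕜] [Fintype n] [Fintype ι] [DecidableEq ι]

theorem Matrix.card_le_of_conjTranspose_mul_self_eq_one {W : Matrix n ι 𝕜} (hW : Wᴴ * W = 1) :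
    Fintype.card ι ≤ Fintype.card n :=
  calc Fintype.card ι = (Wᴴ * W).rank := by rw [hW, rank_one]
    _ ≤ W.rank := rank_mul_le_right _ _
    _ ≤ Fintype.card n := rank_le_card_height W

/-- `X ^ |ι| χ(W D Wᴴ) = X ^ |n| χ(Wᴴ W D) = X ^ |n| χ(D)`, so the zeros are the only
eigenvalues added. -/
theorem Matrix.IsHermitian.eigenvalues_eq_of_eq_mul_diagonal_mul_conjTranspose [DecidableEq n]
    {A : Matrix n n 𝕜} (hA : A.IsHermitian) {W : Matrix n ι 𝕜} (hW : Wᴴ * W = 1) (d : ι → ℝ)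
    (hAW : A = W * diagonal (fun i => (d i : 𝕜)) * Wᴴ) :
    Finset.univ.val.map hA.eigenvalues
      = Finset.univ.val.map d + Multiset.replicate (Fintype.card n - Fintype.card ι) 0 := by
  set μ := Finset.univ.val.map d + Multiset.replicate (Fintype.card n - Fintype.card ι) 0
  have hcharpoly : A.charpoly = ((μ.map ((↑) : ℝ → 𝕜)).map fun a => X - C a).prod := by
    rw [hAW, charpoly_mul_comm_of_le _ _ (card_le_of_conjTranspose_mul_self_eq_one hW),
      ← Matrix.mul_assoc, hW, Matrix.one_mul, charpoly_diagonal]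
    simp [μ, Multiset.map_replicate, mul_comm]
  apply Multiset.map_injective (f := ((↑) : ℝ → 𝕜)) RCLike.ofReal_injective
  rw [Multiset.map_map, ← hA.roots_charpoly_eq_eigenvalues, hcharpoly,
    roots_multiset_prod_X_sub_C]

theorem Matrix.IsHermitian.eigenvalues_eq_of_eq_sum_vecMulVec [DecidableEq n]
    {A : Matrix n n 𝕜} (hA : A.IsHermitian) {u : ι → n → 𝕜}
    (hu : ∀ i j, star (u i) ⬝ᵥ u j = if i = j then 1 else 0) (d : ι → ℝ)
    (hAu : A = ∑ i, (d i : 𝕜) • vecMulVec (u i) (star (u i))) :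
    Finset.univ.val.map hA.eigenvalues
      = Finset.univ.val.map d + Multiset.replicate (Fintype.card n - Fintype.card ι) 0 := by
  refine hA.eigenvalues_eq_of_eq_mul_diagonal_mul_conjTranspose (W := (of u)ᵀ) ?_ d ?_
  · ext i j
    simpa [mul_apply, dotProduct, one_apply] using hu i j
  · ext x y
    simp only [hAu, mul_apply, Matrix.sum_apply, Matrix.smul_apply, vecMulVec_apply,
      transpose_apply, of_apply, conjTranspose_apply, diagonal_apply, mul_ite, mul_zero,
      Finset.sum_ite_eq', Finset.mem_univ, if_true, Pi.star_apply, smul_eq_mul]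
    exact Finset.sum_congr rfl fun _ _ => by ring

end Spectrum

theorem star_kronecker_dotProduct {𝕜 κ κ' β γ : Type*} [RCLike 𝕜] [Fintype β] [Fintype γ]
    (e : Matrix κ β 𝕜) (f : Matrix κ' γ 𝕜) (a b : κ × κ') :
    star ((e ⊗ₖ f) a) ⬝ᵥ (e ⊗ₖ f) b
      = (star (e a.1) ⬝ᵥ e b.1) * (star (f a.2) ⬝ᵥ f b.2) := by
  simp only [dotProduct, Fintype.sum_prod_type, Finset.sum_mul_sum, Pi.star_apply,
    kroneckerMap_apply, star_mul']
  exact Finset.sum_congr rfl fun _ _ => Finset.sum_congr rfl fun _ _ => by ring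

theorem ptranspose_proj_eq_sum_vecMulVec {dB dC : ℕ} {κ : Type*} [Fintype κ]
    (v : Fin dB × Fin dC → ℂ)
    (s : κ → ℝ) (e : κ → Fin dB → ℂ) (f : κ → Fin dC → ℂ)
    (hv : ∀ b c, v (b, c) = ∑ k, (s k : ℂ) * e k b * f k c) :
    ptranspose (proj v) = ∑ a : κ × κ, ((s a.1 * s a.2 : ℝ) : ℂ) •
      vecMulVec ((of e ⊗ₖ (of f).map star) a) (star ((of e ⊗ₖ (of f).map star) a.swap)) := by
  ext ⟨b, c⟩ ⟨b', c'⟩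
  simp only [ptranspose, proj, vecMulVec_apply, Pi.star_apply, hv, star_sum, Finset.sum_mul_sum,
    Matrix.sum_apply, Fintype.sum_prod_type, Matrix.smul_apply, kroneckerMap_apply, map_apply,
    star_mul', Complex.star_def, Complex.conj_ofReal, Complex.conj_conj, smul_eq_mul,
    Complex.ofReal_mul, Prod.fst_swap, Prod.snd_swap, of_apply]
  exact Finset.sum_congr rfl fun _ _ => Finset.sum_congr rfl fun _ _ => by ring

theorem Fintype.sum_prod_self_eq_sum_diag_add_sum_lt {α M : Type*} [Fintype α] [LinearOrder α]
    [AddCommMonoid M] (F : α × α → M) :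
    ∑ a, F a = ∑ k, F (k, k) + ∑ p : {p : α × α // p.1 < p.2}, (F p + F p.1.swap) := by
  have hsplit : ∀ a : α × α, F a = (if a.1 = a.2 then F a else 0)
      + ((if a.1 < a.2 then F a else 0) + if a.2 < a.1 then F a else 0) := by
    intro a
    rcases lt_trichotomy a.1 a.2 with h | h | h
    · simp [h, h.ne, h.not_gt]
    · simp [h]
    · simp [h, h.ne', h.not_gt]
  have hdiag : ∑ a : α × α, (if a.1 = a.2 then F a else 0) = ∑ k, F (k, k) := by
    simp [Fintype.sum_prod_type]
  have hswap : ∑ a : α × α, (if a.2 < a.1 then F a else 0)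
      = ∑ a : α × α, if a.1 < a.2 then F a.swap else 0 :=
    Fintype.sum_equiv (Equiv.prodComm α α) _ _ (fun _ => rfl)
  rw [Finset.sum_congr rfl fun a _ => hsplit a, Finset.sum_add_distrib, Finset.sum_add_distrib,
    hdiag, hswap, ← Finset.sum_add_distrib]
  simp_rw [ite_add_ite, add_zero]
  rw [← Finset.sum_filter]
  exact congrArg _ (Finset.sum_subtype _ (by simp) _)

section Swap

variable {𝕜 n α : Type*} [RCLike 𝕜] [LinearOrder α]

/-- Indexes the eigenvectors of `∑ s k s l |k l⟩⟨l k|`: one per diagonal pair `(k, k)`, and a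
symmetric and an antisymmetric one per pair `k < l`. -/
abbrev SwapIndex (α : Type*) [LinearOrder α] :=
  α ⊕ {p : α × α // p.1 < p.2} ⊕ {p : α × α // p.1 < p.2}

def swapEigenvectors (u : α × α → n → 𝕜) : SwapIndex α → n → 𝕜
  | .inl k => u (k, k)
  | .inr (.inl p) => ((√2)⁻¹ : ℝ) • (u p + u p.1.swap)
  | .inr (.inr p) => ((√2)⁻¹ : ℝ) • (u p - u p.1.swap)

def swapEigenvalues (s : α → ℝ) : SwapIndex α → ℝ
  | .inl k => s k ^ 2
  | .inr (.inl p) => s p.1.1 * s p.1.2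
  | .inr (.inr p) => -(s p.1.1 * s p.1.2)

theorem star_swapEigenvectors_dotProduct [Fintype n] {u : α × α → n → 𝕜}
    (hu : ∀ a b, star (u a) ⬝ᵥ u b = if a = b then 1 else 0) (i j : SwapIndex α) :
    star (swapEigenvectors u i) ⬝ᵥ swapEigenvectors u j = if i = j then 1 else 0 := by
  have hdiag : ∀ (k : α) (p : {p : α × α // p.1 < p.2}), (k, k) ≠ p.1 ∧ (k, k) ≠ p.1.swap := by
    rintro k ⟨⟨a, b⟩, hab⟩
    simp only [ne_eq, Prod.mk.injEq, Prod.swap_prod_mk]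
    constructor <;> rintro ⟨rfl, rfl⟩ <;> exact lt_irrefl _ hab
  have hswap : ∀ p q : {p : α × α // p.1 < p.2}, p.1 ≠ q.1.swap := by
    rintro ⟨⟨a, b⟩, hab⟩ ⟨⟨c, d⟩, hcd⟩ h
    simp only [Prod.swap_prod_mk, Prod.mk.injEq] at h
    obtain ⟨rfl, rfl⟩ := h
    exact lt_asymm hab hcd
  have hc : ((√2)⁻¹ : ℝ) • ((√2)⁻¹ : ℝ) • (1 : 𝕜) + ((√2)⁻¹ : ℝ) • ((√2)⁻¹ : ℝ) • 1 = 1 := by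
    rw [smul_smul, ← add_smul, ← two_mul, ← mul_inv, Real.mul_self_sqrt zero_le_two,
      mul_inv_cancel₀ two_ne_zero, one_smul]
  rcases i with k | p | p <;> rcases j with l | q | q <;>
    simp [swapEigenvectors, hu, star_add, star_sub, star_smul, dotProduct_add, add_dotProduct,
      dotProduct_sub, sub_dotProduct, smul_dotProduct, dotProduct_smul, hdiag,
      (hdiag _ _).1.symm, (hdiag _ _).2.symm, hswap, (hswap _ _).symm, Subtype.val_inj]
  all_goals split_ifs <;> simp [hc]

theorem sum_vecMulVec_swap_eq_sum_swapEigenvectors [Fintype α] (s : α → ℝ)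
    (u : α × α → n → 𝕜) :
    ∑ a : α × α, ((s a.1 * s a.2 : ℝ) : 𝕜) • vecMulVec (u a) (star (u a.swap))
      = ∑ i, (swapEigenvalues s i : 𝕜) •
          vecMulVec (swapEigenvectors u i) (star (swapEigenvectors u i)) := by
  have hc : (((√2)⁻¹ : ℝ) : 𝕜) * (((√2)⁻¹ : ℝ) : 𝕜) = 2⁻¹ := by
    rw [← RCLike.ofReal_mul, ← mul_inv, Real.mul_self_sqrt zero_le_two, RCLike.ofReal_inv,
      RCLike.ofReal_ofNat]
  rw [Fintype.sum_prod_self_eq_sum_diag_add_sum_lt, Fintype.sum_sum_type, Fintype.sum_sum_type,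
    ← Finset.sum_add_distrib]
  congr 1
  · simp [swapEigenvectors, swapEigenvalues, sq]
  · refine Finset.sum_congr rfl fun p _ => ?_
    ext x y
    simp only [swapEigenvectors, swapEigenvalues, Matrix.add_apply, Matrix.smul_apply,
      vecMulVec_apply, Pi.star_apply, Pi.add_apply, Pi.sub_apply, Pi.smul_apply, star_add,
      star_sub, star_smul, star_trivial, RCLike.real_smul_eq_coe_mul, smul_eq_mul,
      RCLike.ofReal_mul, RCLike.ofReal_neg, Prod.fst_swap, Prod.snd_swap, Prod.swap_swap]
    linear_combination (-2 * (s p.1.1 : 𝕜) * s p.1.2 * (u p x * star (u p.1.swap y)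
      + u p.1.swap x * star (u p y))) * hc

theorem card_swapIndex [Fintype α] : Fintype.card (SwapIndex α) = Fintype.card α ^ 2 := by
  have h := Fintype.sum_prod_self_eq_sum_diag_add_sum_lt fun _ : α × α => 1
  simp only [Finset.sum_const, Finset.card_univ, Fintype.card_prod, smul_eq_mul, mul_one] at h
  rw [Fintype.card_sum, Fintype.card_sum, sq, h]
  ring

theorem univ_val_map_swapEigenvalues [Fintype α] (s : α → ℝ) :
    Finset.univ.val.map (swapEigenvalues s)
      = Finset.univ.val.map (fun k => s k ^ 2)
        + (Finset.univ.filter fun p : α × α => p.1 < p.2).val.map (fun p => s p.1 * s p.2)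
        + (Finset.univ.filter fun p : α × α => p.1 < p.2).val.map
            (fun p => -(s p.1 * s p.2)) := by
  simp only [← Finset.univ_disjSum_univ, Finset.val_disjSum, Multiset.disjSum, Multiset.map_add,
    Multiset.map_map]
  rw [← Finset.univ_val_map_subtype_restrict, ← Finset.univ_val_map_subtype_restrict, add_assoc]
  rfl

end Swap

theorem eigenvalues_ptranspose_of_pure_general
    (dB dC m : ℕ)
    (v : Fin dB × Fin dC → ℂ)
    (s : Fin m → ℝ) (e : Fin m → Fin dB → ℂ) (f : Fin m → Fin dC → ℂ)
    (he : ∀ k l, ∑ b : Fin dB, (starRingEnd ℂ) (e k b) * e l b = if k = l then 1 else 0)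
    (hf : ∀ k l, ∑ c : Fin dC, (starRingEnd ℂ) (f k c) * f l c = if k = l then 1 else 0)
    (hv : ∀ b c, v (b, c) = ∑ k : Fin m, (s k : ℂ) * e k b * f k c)
    (hH : (ptranspose (proj v)).IsHermitian) :
    (Finset.univ.val.map hH.eigenvalues) =
      (Finset.univ.val.map fun k : Fin m => s k ^ 2)
        + ((Finset.univ.filter (fun p : Fin m × Fin m => p.1 < p.2)).val.map
            fun p : Fin m × Fin m => s p.1 * s p.2)
        + ((Finset.univ.filter (fun p : Fin m × Fin m => p.1 < p.2)).val.map
            fun p : Fin m × Fin m => -(s p.1 * s p.2))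
        + Multiset.replicate (dB * dC - m ^ 2) (0 : ℝ) := by
  have hu : ∀ a b, star ((of e ⊗ₖ (of f).map star) a) ⬝ᵥ (of e ⊗ₖ (of f).map star) b
      = if a = b then 1 else 0 := by
    intro a b
    have hconj : star ((of f).map star a.2) ⬝ᵥ (of f).map star b.2
        = star (of f b.2) ⬝ᵥ of f a.2 := by
      simp [dotProduct, mul_comm]
    rw [star_kronecker_dotProduct, hconj, show star (of e a.1) ⬝ᵥ of e b.1 = _ from he a.1 b.1,
      show star (of f b.2) ⬝ᵥ of f a.2 = _ from hf b.2 a.2, ite_zero_mul_ite_zero, mul_one]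
    simp only [Prod.ext_iff, eq_comm (a := b.2)]
  have hdecomp := (ptranspose_proj_eq_sum_vecMulVec v s e f hv).trans
    (sum_vecMulVec_swap_eq_sum_swapEigenvectors s _)
  rw [hH.eigenvalues_eq_of_eq_sum_vecMulVec (star_swapEigenvectors_dotProduct hu) _ hdecomp,
    univ_val_map_swapEigenvalues, card_swapIndex]
  simp

theorem eigenvalues_ptranspose_of_pure
    (dB dC m : ℕ) (hdB : 0 < dB) (hdC : 0 < dC) (hm : m = min dB dC)
    (v : Fin dB × Fin dC → ℂ)
    (hv_unit : ∑ p : Fin dB × Fin dC, ‖v p‖ ^ 2 = 1)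
    (s : Fin m → ℝ) (e : Fin m → Fin dB → ℂ) (f : Fin m → Fin dC → ℂ)
    (hs : ∀ k, 0 ≤ s k)
    (he : ∀ k l, ∑ b : Fin dB, (starRingEnd ℂ) (e k b) * e l b = if k = l then 1 else 0)
    (hf : ∀ k l, ∑ c : Fin dC, (starRingEnd ℂ) (f k c) * f l c = if k = l then 1 else 0)
    (hv : ∀ b c, v (b, c) = ∑ k : Fin m, (s k : ℂ) * e k b * f k c)
    (hH : (ptranspose (proj v)).IsHermitian) :
    (Finset.univ.val.map hH.eigenvalues) =
      (Finset.univ.val.map fun k : Fin m => s k ^ 2)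
        + ((Finset.univ.filter (fun p : Fin m × Fin m => p.1 < p.2)).val.map
            fun p : Fin m × Fin m => s p.1 * s p.2)
        + ((Finset.univ.filter (fun p : Fin m × Fin m => p.1 < p.2)).val.map
            fun p : Fin m × Fin m => -(s p.1 * s p.2))
        + Multiset.replicate (dB * dC - m ^ 2) (0 : ℝ) :=
  eigenvalues_ptranspose_of_pure_general dB dC m v s e f he hf hv hH

end
end

section
/- For every bipartite density matrix ρ on ℂ^{d_B}⊗ℂ^{d_C} (finite positive dimensions), every eigenvalue of the partial transpose ρ^Γ is at most 1. -/
/-! The partial transpose preserves the Hilbert–Schmidt pairing `tr (ρ σ)`, hence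
`tr (ρ^Γ)² = tr ρ²`. For a Hermitian matrix `tr A² = ∑ λᵢ²` bounds every `λᵢ²`, while for a
density matrix `tr ρ² = ∑ μⱼ² ≤ (∑ μⱼ)² = 1` since its eigenvalues `μⱼ` are nonnegative. -/

open scoped BigOperators ComplexOrder
open Matrix

noncomputable section

namespace Matrix

variable {𝕜 n : Type*} [RCLike 𝕜] [Fintype n] [DecidableEq n] {A : Matrix n n 𝕜}

theorem IsHermitian.trace_mul_self_eq_sum_sq_eigenvalues (hA : A.IsHermitian) :
    (A * A).trace = ∑ i, (hA.eigenvalues i : 𝕜) ^ 2 := by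
  conv_lhs => rw [hA.spectral_theorem, ← map_mul, Unitary.conjStarAlgAut_apply, trace_mul_cycle,
    Unitary.coe_star_mul_self, one_mul, diagonal_mul_diagonal, trace_diagonal]
  simp [sq]

theorem IsHermitian.sq_eigenvalues_le_re_trace_mul_self (hA : A.IsHermitian) (i : n) :
    hA.eigenvalues i ^ 2 ≤ RCLike.re (A * A).trace := by
  rw [hA.trace_mul_self_eq_sum_sq_eigenvalues]
  simp only [map_sum, ← RCLike.ofReal_pow, RCLike.ofReal_re]
  exact Finset.single_le_sum (fun j _ ↦ sq_nonneg (hA.eigenvalues j)) (Finset.mem_univ i)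

theorem PosSemidef.re_trace_mul_self_le_sq_re_trace (hA : A.PosSemidef) :
    RCLike.re (A * A).trace ≤ RCLike.re A.trace ^ 2 := by
  rw [hA.isHermitian.trace_mul_self_eq_sum_sq_eigenvalues, hA.isHermitian.trace_eq_sum_eigenvalues]
  simp only [map_sum, ← RCLike.ofReal_pow, RCLike.ofReal_re]
  exact Finset.sum_sq_le_sq_sum_of_nonneg fun i _ ↦ hA.eigenvalues_nonneg i

end Matrix

theorem trace_ptranspose_mul_ptranspose {d d' : ℕ}
    (M N : Matrix (Fin d × Fin d') (Fin d × Fin d') ℂ) :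
    (ptranspose M * ptranspose N).trace = (M * N).trace := by
  simp only [trace, diag, mul_apply, ptranspose]
  rw [← Finset.sum_product', ← Finset.sum_product']
  exact Finset.sum_nbij' (fun x ↦ ((x.1.1, x.2.2), (x.2.1, x.1.2)))
    (fun x ↦ ((x.1.1, x.2.2), (x.2.1, x.1.2))) (by simp) (by simp) (by simp) (by simp) (by simp)

theorem eigenvalue_ptranspose_le_one_general
    (dB dC : ℕ)
    (ρ : Matrix (Fin dB × Fin dC) (Fin dB × Fin dC) ℂ)
    (hρ : ρ.PosSemidef) (htr : ρ.trace = 1)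
    (hH : (ptranspose ρ).IsHermitian) :
    ∀ i : Fin dB × Fin dC, hH.eigenvalues i ≤ 1 := by
  intro i
  have hsq : hH.eigenvalues i ^ 2 ≤ 1 := calc
    hH.eigenvalues i ^ 2 ≤ RCLike.re (ptranspose ρ * ptranspose ρ).trace :=
      hH.sq_eigenvalues_le_re_trace_mul_self i
    _ = RCLike.re (ρ * ρ).trace := by rw [trace_ptranspose_mul_ptranspose]
    _ ≤ RCLike.re ρ.trace ^ 2 := hρ.re_trace_mul_self_le_sq_re_trace
    _ = 1 := by simp [htr]
  exact (le_abs_self _).trans ((sq_le_one_iff_abs_le_one _).mp hsq)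

theorem eigenvalue_ptranspose_le_one
    (dB dC : ℕ) (hdB : 0 < dB) (hdC : 0 < dC)
    (ρ : Matrix (Fin dB × Fin dC) (Fin dB × Fin dC) ℂ)
    (hρ : ρ.PosSemidef) (htr : ρ.trace = 1)
    (hH : (ptranspose ρ).IsHermitian) :
    ∀ i : Fin dB × Fin dC, hH.eigenvalues i ≤ 1 :=
  eigenvalue_ptranspose_le_one_general dB dC ρ hρ htr hH

end
end

section
/- Let Ψ be a normalized tripartite pure state in ℂ^{d_A}⊗ℂ^{d_B}⊗ℂ^{d_C}, and let ρ_BC, ρ_AC, ρ_AB be the reduced density matrices obtained by tracing out the first, second, and third factor respectively. Then Tr[(ρ_BC^Γ)³] = Tr[(ρ_AC^Γ)³] = Tr[(ρ_AB^Γ)³], where in each case Γ denotes the partial transpose over the second of the two remaining factors. In other words, the third-order negativity of a tripartite pure state is symmetric under permutations of the three parties. -/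
open scoped BigOperators
open Matrix

noncomputable section

/-- Reduced density matrix on `A,C`: trace out the second factor. -/
def rhoAC (dA dB dC : ℕ) (Ψ : Fin dA × Fin dB × Fin dC → ℂ) :
    Matrix (Fin dA × Fin dC) (Fin dA × Fin dC) ℂ :=
  fun p q => ∑ b : Fin dB, Ψ (p.1, b, p.2) * (starRingEnd ℂ) (Ψ (q.1, b, q.2))

/-- Reduced density matrix on `A,B`: trace out the third factor. -/
def rhoAB (dA dB dC : ℕ) (Ψ : Fin dA × Fin dB × Fin dC → ℂ) :
    Matrix (Fin dA × Fin dB) (Fin dA × Fin dB) ℂ :=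
  fun p q => ∑ c : Fin dC, Ψ (p.1, p.2, c) * (starRingEnd ℂ) (Ψ (q.1, q.2, c))

lemma trace_cube {n : Type*} [Fintype n] [DecidableEq n] (M : Matrix n n ℂ) :
    (M ^ 3).trace = ∑ p : n, ∑ q : n, ∑ r : n, M p q * (M q r * M r p) := by
  simp only [pow_succ, pow_zero, Matrix.one_mul, Matrix.trace, Matrix.diag, Matrix.mul_apply,
    Finset.sum_mul, Finset.mul_sum]
  exact Finset.sum_congr rfl fun p _ => by rw [Finset.sum_comm]; simp [mul_assoc]

lemma expandBC (dA dB dC : ℕ) (Ψ : Fin dA × Fin dB × Fin dC → ℂ) :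
    ((ptranspose (rhoBC dA dB dC Ψ)) ^ 3).trace
      = ∑ x : ((Fin dB × Fin dC) × (Fin dB × Fin dC) × (Fin dB × Fin dC)) × (Fin dA × Fin dA × Fin dA),
          Ψ (x.2.2.2, x.1.1.1, x.1.2.1.2) * (starRingEnd ℂ) (Ψ (x.2.2.2, x.1.2.1.1, x.1.1.2)) *
          (Ψ (x.2.2.1, x.1.2.1.1, x.1.2.2.2) * (starRingEnd ℂ) (Ψ (x.2.2.1, x.1.2.2.1, x.1.2.1.2)) *
           (Ψ (x.2.1, x.1.2.2.1, x.1.1.2) * (starRingEnd ℂ) (Ψ (x.2.1, x.1.1.1, x.1.2.2.2)))) := by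
  rw [trace_cube]
  simp only [ptranspose, rhoBC, Fintype.sum_prod_type, Finset.sum_mul, Finset.mul_sum, mul_assoc]

lemma expandAC (dA dB dC : ℕ) (Ψ : Fin dA × Fin dB × Fin dC → ℂ) :
    ((ptranspose (rhoAC dA dB dC Ψ)) ^ 3).trace
      = ∑ x : ((Fin dA × Fin dC) × (Fin dA × Fin dC) × (Fin dA × Fin dC)) × (Fin dB × Fin dB × Fin dB),
          Ψ (x.1.1.1, x.2.2.2, x.1.2.1.2) * (starRingEnd ℂ) (Ψ (x.1.2.1.1, x.2.2.2, x.1.1.2)) *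
          (Ψ (x.1.2.1.1, x.2.2.1, x.1.2.2.2) * (starRingEnd ℂ) (Ψ (x.1.2.2.1, x.2.2.1, x.1.2.1.2)) *
           (Ψ (x.1.2.2.1, x.2.1, x.1.1.2) * (starRingEnd ℂ) (Ψ (x.1.1.1, x.2.1, x.1.2.2.2)))) := by
  rw [trace_cube]
  simp only [ptranspose, rhoAC, Fintype.sum_prod_type, Finset.sum_mul, Finset.mul_sum, mul_assoc]

lemma expandAB (dA dB dC : ℕ) (Ψ : Fin dA × Fin dB × Fin dC → ℂ) :
    ((ptranspose (rhoAB dA dB dC Ψ)) ^ 3).trace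
      = ∑ x : ((Fin dA × Fin dB) × (Fin dA × Fin dB) × (Fin dA × Fin dB)) × (Fin dC × Fin dC × Fin dC),
          Ψ (x.1.1.1, x.1.2.1.2, x.2.2.2) * (starRingEnd ℂ) (Ψ (x.1.2.1.1, x.1.1.2, x.2.2.2)) *
          (Ψ (x.1.2.1.1, x.1.2.2.2, x.2.2.1) * (starRingEnd ℂ) (Ψ (x.1.2.2.1, x.1.2.1.2, x.2.2.1)) *
           (Ψ (x.1.2.2.1, x.1.1.2, x.2.1) * (starRingEnd ℂ) (Ψ (x.1.1.1, x.1.2.2.2, x.2.1)))) := by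
  rw [trace_cube]
  simp only [ptranspose, rhoAB, Fintype.sum_prod_type, Finset.sum_mul, Finset.mul_sum, mul_assoc]

def eBCAC {dA dB dC : ℕ} :
    (((Fin dB × Fin dC) × (Fin dB × Fin dC) × (Fin dB × Fin dC)) × (Fin dA × Fin dA × Fin dA))
    ≃ (((Fin dA × Fin dC) × (Fin dA × Fin dC) × (Fin dA × Fin dC)) × (Fin dB × Fin dB × Fin dB)) where
  toFun := fun x => (((x.2.2.1, x.1.1.2), (x.2.2.2, x.1.2.2.2), (x.2.1, x.1.2.1.2)),
    (x.1.2.2.1, x.1.1.1, x.1.2.1.1))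
  invFun := fun y => (((y.2.2.1, y.1.1.2), (y.2.2.2, y.1.2.2.2), (y.2.1, y.1.2.1.2)),
    (y.1.2.2.1, y.1.1.1, y.1.2.1.1))
  left_inv := fun ⟨⟨⟨_,_⟩,⟨_,_⟩,⟨_,_⟩⟩,⟨_,_,_⟩⟩ => rfl
  right_inv := fun ⟨⟨⟨_,_⟩,⟨_,_⟩,⟨_,_⟩⟩,⟨_,_,_⟩⟩ => rfl

def eBCAB {dA dB dC : ℕ} :
    (((Fin dB × Fin dC) × (Fin dB × Fin dC) × (Fin dB × Fin dC)) × (Fin dA × Fin dA × Fin dA))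
    ≃ (((Fin dA × Fin dB) × (Fin dA × Fin dB) × (Fin dA × Fin dB)) × (Fin dC × Fin dC × Fin dC)) where
  toFun := fun x => (((x.2.1, x.1.2.1.1), (x.2.2.2, x.1.2.2.1), (x.2.2.1, x.1.1.1)),
    (x.1.2.2.2, x.1.2.1.2, x.1.1.2))
  invFun := fun y => (((y.1.2.2.2, y.2.2.2), (y.1.1.2, y.2.2.1), (y.1.2.1.2, y.2.1)),
    (y.1.1.1, y.1.2.2.1, y.1.2.1.1))
  left_inv := fun ⟨⟨⟨_,_⟩,⟨_,_⟩,⟨_,_⟩⟩,⟨_,_,_⟩⟩ => rfl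
  right_inv := fun ⟨⟨⟨_,_⟩,⟨_,_⟩,⟨_,_⟩⟩,⟨_,_,_⟩⟩ => rfl

theorem I5_symmetric
    (dA dB dC : ℕ) (hdA : 0 < dA) (hdB : 0 < dB) (hdC : 0 < dC)
    (Ψ : Fin dA × Fin dB × Fin dC → ℂ)
    (hΨ : ∑ v : Fin dA × Fin dB × Fin dC, ‖Ψ v‖ ^ 2 = 1) :
    ((ptranspose (rhoBC dA dB dC Ψ)) ^ 3).trace
        = ((ptranspose (rhoAC dA dB dC Ψ)) ^ 3).trace ∧
      ((ptranspose (rhoAC dA dB dC Ψ)) ^ 3).trace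
        = ((ptranspose (rhoAB dA dB dC Ψ)) ^ 3).trace := by
  have h1 : ((ptranspose (rhoBC dA dB dC Ψ)) ^ 3).trace
      = ((ptranspose (rhoAC dA dB dC Ψ)) ^ 3).trace := by
    rw [expandBC, expandAC]
    refine Fintype.sum_equiv eBCAC _ _ fun x => ?_
    obtain ⟨⟨⟨b1,c1⟩,⟨b2,c2⟩,⟨b3,c3⟩⟩,⟨t1,t2,t3⟩⟩ := x
    simp only [eBCAC, Equiv.coe_fn_mk]
    ring
  have h2 : ((ptranspose (rhoBC dA dB dC Ψ)) ^ 3).trace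
      = ((ptranspose (rhoAB dA dB dC Ψ)) ^ 3).trace := by
    rw [expandBC, expandAB]
    refine Fintype.sum_equiv eBCAB _ _ fun x => ?_
    obtain ⟨⟨⟨b1,c1⟩,⟨b2,c2⟩,⟨b3,c3⟩⟩,⟨t1,t2,t3⟩⟩ := x
    simp only [eBCAB, Equiv.coe_fn_mk]
    ring
  exact ⟨h1, h1 ▸ h2⟩

end
end

section
/- Let |x₀⟩, |x₁⟩ be linearly independent vectors in ℂ^{d_X} and |y₀⟩, |y₁⟩ be linearly independent vectors in ℂ^{d_Y}. Let μ₀, μ₁ ≥ 0, s ∈ ℂ, and suppose the operator σ = μ₀|x₀⊗y₀⟩⟨x₀⊗y₀| + μ₁|x₁⊗y₁⟩⟨x₁⊗y₁| + s|x₀⊗y₀⟩⟨x₁⊗y₁| + conj(s)|x₁⊗y₁⟩⟨x₀⊗y₀| is positive semidefinite. Then σ is separable across the X|Y bipartition if and only if s = 0. -/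
open scoped BigOperators ComplexOrder
open Matrix

noncomputable section

/-- The elementary tensor of two vectors. -/
def tensorVec {dX dY : ℕ} (x : Fin dX → ℂ) (y : Fin dY → ℂ) : Fin dX × Fin dY → ℂ :=
  fun p => x p.1 * y p.2

/-- The rank-one operator `|u⟩⟨v|`, with entries `u i * conj (v j)`. -/
def ketbra {n : Type*} [Fintype n] (u v : n → ℂ) : Matrix n n ℂ :=
  Matrix.vecMulVec u (star v)

/-- Separability across the `X|Y` bipartition. -/
def SeparableXY (dX dY : ℕ) (σ : Matrix (Fin dX × Fin dY) (Fin dX × Fin dY) ℂ) : Prop :=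
  ∃ (m : ℕ) (q : Fin m → ℝ) (u : Fin m → Fin dX → ℂ) (v : Fin m → Fin dY → ℂ),
    (∀ j, 0 ≤ q j) ∧
    σ = ∑ j, (q j : ℂ) • ketbra (tensorVec (u j) (v j)) (tensorVec (u j) (v j))

namespace SepAux

lemma dot_tensor {dX dY : ℕ} (φ : Fin dX → ℂ) (η : Fin dY → ℂ) (x : Fin dX → ℂ)
    (z : Fin dY → ℂ) :
    star (tensorVec φ η) ⬝ᵥ tensorVec x z = (star φ ⬝ᵥ x) * (star η ⬝ᵥ z) := by
  simp only [dotProduct, tensorVec, Pi.star_apply, Fintype.sum_prod_type,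
    Finset.sum_mul, Finset.mul_sum]
  rw [Finset.sum_comm]
  refine Finset.sum_congr rfl fun i _ => ?_
  refine Finset.sum_congr rfl fun j _ => ?_
  simp only [star_mul']
  ring

lemma ketbra_mulVec {n : Type*} [Fintype n] (u v w : n → ℂ) :
    ketbra u v *ᵥ w = (star v ⬝ᵥ w) • u := by
  funext i
  simp [ketbra, mulVec, vecMulVec, dotProduct, Finset.mul_sum]
  rw [Finset.sum_mul]
  refine Finset.sum_congr rfl fun j _ => by ring

lemma quad_ketbra {n : Type*} [Fintype n] (u v w : n → ℂ) :
    star w ⬝ᵥ (ketbra u v *ᵥ w) = (star w ⬝ᵥ u) * (star v ⬝ᵥ w) := by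
  rw [ketbra_mulVec, dotProduct_smul]
  simp [mul_comm]

lemma star_dot_conj {n : Type*} [Fintype n] (u w : n → ℂ) :
    star u ⬝ᵥ w = (starRingEnd ℂ) (star w ⬝ᵥ u) := by
  simp only [dotProduct, Pi.star_apply, map_sum, _root_.map_mul]
  refine Finset.sum_congr rfl fun i _ => ?_
  simp [mul_comm, Complex.conj_conj, RCLike.star_def]

lemma exists_dual {d : ℕ} {a b : Fin d → ℂ} (h : LinearIndependent ℂ ![a, b]) :
    ∃ f : Fin d → ℂ, f ⬝ᵥ a = 1 ∧ f ⬝ᵥ b = 0 := by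
  have hab : a ∉ Submodule.span ℂ {b} := by
    rw [Submodule.mem_span_singleton]
    rintro ⟨c, hc⟩
    have := (LinearIndependent.pair_iff.mp h) 1 (-c) (by rw [← hc]; module)
    exact one_ne_zero this.1
  set S := Submodule.span ℂ ({b} : Set (Fin d → ℂ))
  have ha0 : Submodule.Quotient.mk (p := S) a ≠ 0 := by
    simpa [Submodule.Quotient.mk_eq_zero] using hab
  obtain ⟨g, hg⟩ : ∃ g : Module.Dual ℂ ((Fin d → ℂ) ⧸ S),
      g (Submodule.Quotient.mk a) ≠ 0 := by
    by_contra hcon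
    push_neg at hcon
    exact ha0 ((Module.forall_dual_apply_eq_zero_iff ℂ _).mp hcon)
  set F : (Fin d → ℂ) →ₗ[ℂ] ℂ :=
    (g (Submodule.Quotient.mk a))⁻¹ • (g ∘ₗ S.mkQ) with hF
  have hFa : F a = 1 := by
    simp [hF, Submodule.mkQ_apply, inv_mul_cancel₀ hg]
  have hFb : F b = 0 := by
    have : (b : Fin d → ℂ) ∈ S := Submodule.mem_span_singleton_self b
    simp [hF, Submodule.mkQ_apply, (Submodule.Quotient.mk_eq_zero S).mpr this]
  refine ⟨fun i => F (Pi.single i 1), ?_, ?_⟩ <;>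
  · rw [show ∀ v : Fin d → ℂ, (fun i => F (Pi.single i 1)) ⬝ᵥ v = F v from fun v => ?_]
    · simp [hFa, hFb]
    · rw [LinearMap.pi_apply_eq_sum_univ F v]
      simp only [dotProduct, smul_eq_mul]
      refine Finset.sum_congr rfl fun i _ => ?_
      rw [mul_comm]
      congr 1
      congr 1
      funext j
      simp [Pi.single_apply, eq_comm]

lemma pair_swap {V : Type*} [AddCommGroup V] [Module ℂ V] {a b : V}
    (h : LinearIndependent ℂ ![a, b]) : LinearIndependent ℂ ![b, a] := by
  rw [LinearIndependent.pair_iff] at h ⊢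
  intro s t hst
  have := h t s (by rw [add_comm]; exact hst)
  exact ⟨this.2, this.1⟩

variable {dX dY : ℕ}

def pt (A : Matrix (Fin dX × Fin dY) (Fin dX × Fin dY) ℂ) :
    Matrix (Fin dX × Fin dY) (Fin dX × Fin dY) ℂ :=
  Matrix.of fun p q => A (p.1, q.2) (q.1, p.2)

lemma pt_add (A B : Matrix (Fin dX × Fin dY) (Fin dX × Fin dY) ℂ) :
    pt (A + B) = pt A + pt B := rfl

lemma pt_smul (c : ℂ) (A : Matrix (Fin dX × Fin dY) (Fin dX × Fin dY) ℂ) :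
    pt (c • A) = c • pt A := rfl

lemma pt_sum {m : ℕ} (f : Fin m → Matrix (Fin dX × Fin dY) (Fin dX × Fin dY) ℂ) :
    pt (∑ j, f j) = ∑ j, pt (f j) := by
  funext p q
  simp [pt, Matrix.sum_apply]

lemma pt_ketbra (u u' : Fin dX → ℂ) (v v' : Fin dY → ℂ) :
    pt (ketbra (tensorVec u v) (tensorVec u' v')) =
      ketbra (tensorVec u (star v')) (tensorVec u' (star v)) := by
  funext p q
  simp only [pt, ketbra, tensorVec, vecMulVec, Matrix.of_apply, Pi.star_apply, star_mul']
  simp only [star_star]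
  ring

lemma sum_mulVec {m : ℕ} {n : Type*} [Fintype n] (f : Fin m → Matrix n n ℂ) (w : n → ℂ) :
    (∑ j, f j) *ᵥ w = ∑ j, f j *ᵥ w := by
  funext i
  simp only [mulVec, dotProduct, Matrix.sum_apply, Finset.sum_mul, Finset.sum_apply]
  rw [Finset.sum_comm]

lemma dot_sum {m : ℕ} {n : Type*} [Fintype n] (w : n → ℂ) (f : Fin m → n → ℂ) :
    w ⬝ᵥ (∑ j, f j) = ∑ j, w ⬝ᵥ f j := by
  simp [dotProduct, Finset.mul_sum]
  rw [Finset.sum_comm]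

lemma dot_tensor' {dX dY : ℕ} (f : Fin dX → ℂ) (g : Fin dY → ℂ) (x : Fin dX → ℂ)
    (z : Fin dY → ℂ) :
    star (tensorVec (star f) g) ⬝ᵥ tensorVec x (star z)
      = (f ⬝ᵥ x) * (starRingEnd ℂ) (g ⬝ᵥ z) := by
  rw [dot_tensor, star_star]
  congr 1
  rw [star_dot_conj g (star z), star_star, dotProduct_comm]

end SepAux

theorem separable_two_term_iff
    (dX dY : ℕ)
    (x₀ x₁ : Fin dX → ℂ) (y₀ y₁ : Fin dY → ℂ)
    (hx : LinearIndependent ℂ ![x₀, x₁]) (hy : LinearIndependent ℂ ![y₀, y₁])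
    (μ₀ μ₁ : ℝ) (hμ₀ : 0 ≤ μ₀) (hμ₁ : 0 ≤ μ₁) (s : ℂ)
    (σ : Matrix (Fin dX × Fin dY) (Fin dX × Fin dY) ℂ)
    (hσ : σ = (μ₀ : ℂ) • ketbra (tensorVec x₀ y₀) (tensorVec x₀ y₀)
        + (μ₁ : ℂ) • ketbra (tensorVec x₁ y₁) (tensorVec x₁ y₁)
        + s • ketbra (tensorVec x₀ y₀) (tensorVec x₁ y₁)
        + (starRingEnd ℂ) s • ketbra (tensorVec x₁ y₁) (tensorVec x₀ y₀))
    (hpsd : σ.PosSemidef) :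
    SeparableXY dX dY σ ↔ s = 0 := by
  constructor
  · rintro ⟨m, q, u, v, hq, hdec⟩
    obtain ⟨f₀, hf₀a, hf₀b⟩ := SepAux.exists_dual hx
    obtain ⟨f₁, hf₁a, hf₁b⟩ := SepAux.exists_dual (SepAux.pair_swap hx)
    obtain ⟨g₀, hg₀a, hg₀b⟩ := SepAux.exists_dual hy
    obtain ⟨g₁, hg₁a, hg₁b⟩ := SepAux.exists_dual (SepAux.pair_swap hy)
    set A := tensorVec x₀ (star y₀) with hA_def
    set B := tensorVec x₁ (star y₁) with hB_def
    set C := tensorVec x₀ (star y₁) with hC_def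
    set D := tensorVec x₁ (star y₀) with hD_def
    set w₁ := tensorVec (star f₀) g₁ with hw₁_def
    set w₂ := tensorVec (star f₁) g₀ with hw₂_def
    set t : ℂ := -(starRingEnd ℂ) s with ht_def
    set w : Fin dX × Fin dY → ℂ := w₁ + t • w₂ with hw_def
    -- decompose the dot products against w
    have hw : ∀ V : Fin dX × Fin dY → ℂ,
        star w ⬝ᵥ V = star w₁ ⬝ᵥ V + (starRingEnd ℂ) t * (star w₂ ⬝ᵥ V) := by
      intro V
      have : star w = star w₁ + (starRingEnd ℂ) t • star w₂ := by
        rw [hw_def, star_add, star_smul]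
        rfl
      rw [this, add_dotProduct, smul_dotProduct, smul_eq_mul]
    have hwA : star w ⬝ᵥ A = 0 := by
      rw [hw, hw₁_def, hw₂_def, hA_def, SepAux.dot_tensor', SepAux.dot_tensor',
        hf₀a, hf₁b, hg₀a, hg₁b]
      simp
    have hwB : star w ⬝ᵥ B = 0 := by
      rw [hw, hw₁_def, hw₂_def, hB_def, SepAux.dot_tensor', SepAux.dot_tensor',
        hf₀b, hf₁a, hg₀b, hg₁a]
      simp
    have hwC : star w ⬝ᵥ C = 1 := by
      rw [hw, hw₁_def, hw₂_def, hC_def, SepAux.dot_tensor', SepAux.dot_tensor',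
        hf₀a, hf₁b, hg₀b, hg₁a]
      simp
    have hwD : star w ⬝ᵥ D = (starRingEnd ℂ) t := by
      rw [hw, hw₁_def, hw₂_def, hD_def, SepAux.dot_tensor', SepAux.dot_tensor',
        hf₀b, hf₁a, hg₀a, hg₁b]
      simp
    have hAw : star A ⬝ᵥ w = 0 := by
      rw [SepAux.star_dot_conj, hwA, map_zero]
    have hBw : star B ⬝ᵥ w = 0 := by
      rw [SepAux.star_dot_conj, hwB, map_zero]
    have hCw : star C ⬝ᵥ w = 1 := by
      rw [SepAux.star_dot_conj, hwC]
      exact RingHom.map_one _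
    have hDw : star D ⬝ᵥ w = t := by
      rw [SepAux.star_dot_conj, hwD, Complex.conj_conj]
    -- value of the quadratic form of the partial transpose
    have hpt : SepAux.pt σ = (μ₀ : ℂ) • ketbra A A + (μ₁ : ℂ) • ketbra B B
        + s • ketbra C D + (starRingEnd ℂ) s • ketbra D C := by
      rw [hσ, SepAux.pt_add, SepAux.pt_add, SepAux.pt_add, SepAux.pt_smul, SepAux.pt_smul,
        SepAux.pt_smul, SepAux.pt_smul, SepAux.pt_ketbra, SepAux.pt_ketbra,
        SepAux.pt_ketbra, SepAux.pt_ketbra]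
    have hQval : star w ⬝ᵥ (SepAux.pt σ *ᵥ w)
        = -(2 * (Complex.normSq s : ℂ)) := by
      rw [hpt, add_mulVec, add_mulVec, add_mulVec, smul_mulVec, smul_mulVec,
        smul_mulVec, smul_mulVec, dotProduct_add, dotProduct_add,
        dotProduct_add, dotProduct_smul, dotProduct_smul, dotProduct_smul, dotProduct_smul,
        SepAux.quad_ketbra, SepAux.quad_ketbra, SepAux.quad_ketbra, SepAux.quad_ketbra,
        hwA, hwB, hwC, hwD, hAw, hBw, hCw, hDw]
      simp only [smul_eq_mul, ht_def, map_neg, Complex.conj_conj]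
      rw [← Complex.mul_conj]
      ring
    -- nonnegativity of the quadratic form of the partial transpose
    have hpt2 : SepAux.pt σ = ∑ j, (q j : ℂ) •
        ketbra (tensorVec (u j) (star (v j))) (tensorVec (u j) (star (v j))) := by
      rw [hdec, SepAux.pt_sum]
      exact Finset.sum_congr rfl fun j _ => by rw [SepAux.pt_smul, SepAux.pt_ketbra]
    have hQnn : 0 ≤ star w ⬝ᵥ (SepAux.pt σ *ᵥ w) := by
      rw [hpt2, SepAux.sum_mulVec, SepAux.dot_sum]
      refine Finset.sum_nonneg fun j _ => ?_
      rw [smul_mulVec, dotProduct_smul, smul_eq_mul, SepAux.quad_ketbra,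
        SepAux.star_dot_conj _ w]
      refine mul_nonneg ?_ ?_
      · rw [Complex.zero_le_real]
        exact hq j
      · rw [Complex.mul_conj, Complex.zero_le_real]
        exact Complex.normSq_nonneg _
    rw [hQval] at hQnn
    have h2 : (0:ℝ) ≤ -(2 * Complex.normSq s) := by
      rwa [show (-(2 * (Complex.normSq s : ℂ))) = ((-(2 * Complex.normSq s) : ℝ) : ℂ) by
        push_cast; ring, Complex.zero_le_real] at hQnn
    have : Complex.normSq s = 0 := le_antisymm (by linarith) (Complex.normSq_nonneg _)
    exact Complex.normSq_eq_zero.mp this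
  · rintro rfl
    refine ⟨2, ![μ₀, μ₁], ![x₀, x₁], ![y₀, y₁], ?_, ?_⟩
    · intro j
      fin_cases j <;> assumption
    · rw [hσ]
      simp [Fin.sum_univ_two]

end
end

section
/- Let Ψ : (∏_{r=1}^{q} Fin d_r) → ℂ be a normalized q-partite pure state, let N ≥ 1, and let Ω₁, …, Ω_q be permutations of {1,…,N}. If |Z(Ψ; Ω₁,…,Ω_q)| = 1, then for every family of index assignments i_r : {1,…,N} → Fin d_r (r = 1,…,q) one has ∏_{x=1}^{N} Ψ(i₁(Ω₁(x)), …, i_q(Ω_q(x))) = ∏_{x=1}^{N} Ψ(i₁(x), …, i_q(x)); equivalently, the replicated state Ψ^{⊗N} is a fixed vector of the permutation operator Ω₁Ω₂⋯Ω_q with eigenvalue exactly 1. -/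
/-!
`Z` is the inner product `⟪a, P a⟫` of the unit vector `a = Ψ^{⊗N}` with its image under the
unitary replica permutation `P = Ω₁ ⋯ Ω_q`. So `‖Z‖ = 1` is the equality case of Cauchy–Schwarz,
giving `P a = c • a`; and `c = 1` because `P` fixes every constant index assignment `i r x = v r`,
at which `a` equals `Ψ v ^ N`, nonzero for a suitable `v` since `Ψ` is normalized.
-/

open scoped BigOperators

noncomputable section

/-- The replica invariant `Z(Ψ; Ω₁,…,Ω_q)` for `N` replicas. -/
def Zrep (q N : ℕ) (d : Fin q → ℕ) (Ψ : (∀ r, Fin (d r)) → ℂ)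
    (Ω : Fin q → Equiv.Perm (Fin N)) : ℂ :=
  ∑ i : ∀ r : Fin q, Fin N → Fin (d r),
    (∏ x : Fin N, (starRingEnd ℂ) (Ψ fun r => i r x)) *
      (∏ x : Fin N, Ψ fun r => i r (Ω r x))

open scoped InnerProductSpace

theorem EuclideanSpace.eq_of_norm_inner_eq_of_apply_eq {𝕜 ι : Type*} [RCLike 𝕜] [Fintype ι]
    {a b : EuclideanSpace 𝕜 ι} (h : ‖⟪a, b⟫_𝕜‖ = ‖a‖ * ‖b‖) {j : ι} (ha : a j ≠ 0)
    (hab : b j = a j) : b = a := by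
  have ha0 : a ≠ 0 := fun h0 => ha (by simp [h0])
  have hb0 : b ≠ 0 := fun h0 => ha (by simp [← hab, h0])
  obtain ⟨c, -, rfl⟩ := (norm_inner_eq_norm_iff ha0 hb0).mp h
  have hc : c = 1 := mul_right_cancel₀ ha (by simpa using hab)
  rw [hc, one_smul]

section Replica

variable {ι : Type*} {α : ι → Type*}

def replicaVector (Ψ : (∀ r, α r) → ℂ) (n : Type*) [Fintype n] :
    EuclideanSpace ℂ (∀ r, n → α r) :=
  WithLp.toLp 2 fun i => ∏ x, Ψ fun r => i r x

variable {n : Type*}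

def replicaRelabel (Ω : ι → Equiv.Perm n) : (∀ r, n → α r) ≃ (∀ r, n → α r) where
  toFun i r x := i r (Ω r x)
  invFun i r x := i r ((Ω r).symm x)
  left_inv i := by simp
  right_inv i := by simp

variable [Fintype ι] [DecidableEq ι] [∀ r, Fintype (α r)] [Fintype n] [DecidableEq n]

/-- The operator `Ω₁ ⋯ Ω_q`, where `Ω r` permutes the replicas of the `r`-th subsystem. -/
def replicaPermOp (Ω : ι → Equiv.Perm n) :
    EuclideanSpace ℂ (∀ r, n → α r) ≃ₗᵢ[ℂ] EuclideanSpace ℂ (∀ r, n → α r) :=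
  LinearIsometryEquiv.piLpCongrLeft 2 ℂ ℂ (replicaRelabel Ω).symm

theorem replicaPermOp_apply (Ω : ι → Equiv.Perm n) (v : EuclideanSpace ℂ (∀ r, n → α r))
    (i : ∀ r, n → α r) : replicaPermOp Ω v i = v fun r x => i r (Ω r x) :=
  rfl

theorem norm_replicaVector_sq (Ψ : (∀ r, α r) → ℂ) :
    ‖replicaVector Ψ n‖ ^ 2 = (∑ v, ‖Ψ v‖ ^ 2) ^ Fintype.card n := by
  rw [EuclideanSpace.norm_sq_eq, ← Finset.card_univ, ← Finset.prod_const, Fintype.prod_sum,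
    ← (Equiv.piComm fun (_ : n) (r : ι) => α r).sum_comp]
  refine Fintype.sum_congr _ _ fun j => ?_
  simp [replicaVector, norm_prod, Finset.prod_pow]

end Replica

theorem Zrep_eq_inner (q N : ℕ) (d : Fin q → ℕ) (Ψ : (∀ r, Fin (d r)) → ℂ)
    (Ω : Fin q → Equiv.Perm (Fin N)) :
    Zrep q N d Ψ Ω = ⟪replicaVector Ψ (Fin N), replicaPermOp Ω (replicaVector Ψ (Fin N))⟫_ℂ := by
  simp [Zrep, PiLp.inner_apply, replicaPermOp_apply, replicaVector, map_prod, mul_comm]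

theorem replica_extremal_fixed_vector_general
    (q N : ℕ) (d : Fin q → ℕ)
    (Ψ : (∀ r, Fin (d r)) → ℂ)
    (hΨ : ∑ v : ∀ r, Fin (d r), ‖Ψ v‖ ^ 2 = 1)
    (Ω : Fin q → Equiv.Perm (Fin N))
    (hZ : ‖Zrep q N d Ψ Ω‖ = 1) :
    ∀ i : ∀ r : Fin q, Fin N → Fin (d r),
      (∏ x : Fin N, Ψ fun r => i r (Ω r x)) = ∏ x : Fin N, Ψ fun r => i r x := by
  set a := replicaVector Ψ (Fin N)
  have ha : ‖a‖ = 1 :=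
    (pow_eq_one_iff_of_nonneg (norm_nonneg a) two_ne_zero).mp
      (by rw [norm_replicaVector_sq, hΨ, one_pow])
  obtain ⟨v, hv⟩ : ∃ v, Ψ v ≠ 0 := by
    by_contra! h
    simp [h] at hΨ
  have hfixed : replicaPermOp Ω a = a :=
    EuclideanSpace.eq_of_norm_inner_eq_of_apply_eq
      (by rw [← Zrep_eq_inner, hZ, LinearIsometryEquiv.norm_map, ha, one_mul])
      (j := fun r _ => v r) (by simp [a, replicaVector, hv]) (replicaPermOp_apply Ω a _)
  intro i
  exact congrArg (· i) hfixed

theorem replica_extremal_fixed_vector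
    (q N : ℕ) (hN : 1 ≤ N) (d : Fin q → ℕ)
    (Ψ : (∀ r, Fin (d r)) → ℂ)
    (hΨ : ∑ v : ∀ r, Fin (d r), ‖Ψ v‖ ^ 2 = 1)
    (Ω : Fin q → Equiv.Perm (Fin N))
    (hZ : ‖Zrep q N d Ψ Ω‖ = 1) :
    ∀ i : ∀ r : Fin q, Fin N → Fin (d r),
      (∏ x : Fin N, Ψ fun r => i r (Ω r x)) = ∏ x : Fin N, Ψ fun r => i r x :=
  replica_extremal_fixed_vector_general q N d Ψ hΨ Ω hZ
end
end
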